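/- Let X be a perfectly normal space (every closed set is a Gδ and open sets are countable unions of closed sets, equivalently countable unions of zero sets) in which every nowhere dense set is countable. Then every quasicontinuous function f : X → ℝ is of the first Baire class, i.e., f is the pointwise limit of a sequence of continuous real-valued functions on X. -/

import Mathlib

/-!
For an open `O`, quasicontinuity makes `f ⁻¹' O` differ from its interior only by a subset of the
frontier of that interior, which is nowhere dense and hence countable; in a perfectly normal T₁
space both pieces are Fσ, so `f` is Fσ-measurable.

For an Fσ-measurable `f` with values in `[0, 1]`, the reduction property of Fσ sets yields a set
`H`, both Fσ and Gδ, with `{f ≥ 2/3} ⊆ H ⊆ {f > 1/3}`; then `f = 1_H / 3 + (2/3) g` with `g` again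
Fσ-measurable with values in `[0, 1]`. Iterating gives `f = ∑ (2/3)ⁿ/3 · 1_{Hₙ}`. Each indicator is
a pointwise limit of Urysohn functions with values in `[0, 1]`, and Tannery's theorem passes these
limits through the sum. Unbounded `f` are reduced to this case through the sigmoid.
-/

open Set Filter Topology Real

namespace Real

noncomputable def logit (s : ℝ) : ℝ := log (s / (1 - s))

theorem logit_sigmoid (t : ℝ) : logit (sigmoid t) = t := by
  rw [logit, ← sigmoid_neg, ← sigmoid_mul_rexp_neg, div_mul_cancel_left₀ (sigmoid_pos t).ne',
    log_inv, log_exp, neg_neg]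

theorem continuousOn_logit : ContinuousOn logit (Ioo 0 1) :=
  (continuousOn_id.div (continuousOn_const.sub continuousOn_id)
    fun _ hs => (sub_pos.2 hs.2).ne').log fun _ hs => (div_pos hs.1 (sub_pos.2 hs.2)).ne'

end Real

section

variable {X : Type*} [TopologicalSpace X]

/-- Countable unions of closed sets, encoded as complements of `Gδ` sets. -/
def IsFσ (s : Set X) : Prop := IsGδ sᶜ

theorem isFσ_compl_iff {s : Set X} : IsFσ sᶜ ↔ IsGδ s := by
  rw [IsFσ, compl_compl]

theorem IsClosed.isFσ {s : Set X} (hs : IsClosed s) : IsFσ s :=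
  hs.isOpen_compl.isGδ

theorem IsOpen.isFσ [PerfectlyNormalSpace X] {s : Set X} (hs : IsOpen s) : IsFσ s :=
  hs.isClosed_compl.isGδ

theorem Set.Countable.isFσ [T1Space X] {s : Set X} (hs : s.Countable) : IsFσ s :=
  hs.isGδ_compl

theorem IsFσ.union {s t : Set X} (hs : IsFσ s) (ht : IsFσ t) : IsFσ (s ∪ t) := by
  rw [IsFσ, compl_union]
  exact hs.inter ht

theorem IsFσ.inter {s t : Set X} (hs : IsFσ s) (ht : IsFσ t) : IsFσ (s ∩ t) := by
  rw [IsFσ, compl_inter]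
  exact IsGδ.union hs ht

theorem IsFσ.iUnion {s : ℕ → Set X} (hs : ∀ n, IsFσ (s n)) : IsFσ (⋃ n, s n) := by
  rw [IsFσ, compl_iUnion]
  exact .iInter hs

theorem IsFσ.exists_monotone_isClosed {s : Set X} (hs : IsFσ s) :
    ∃ C : ℕ → Set X, Monotone C ∧ (∀ n, IsClosed (C n)) ∧ s = ⋃ n, C n := by
  obtain ⟨U, hU, hsU⟩ := isGδ_iff_eq_iInter_nat.1 hs
  refine ⟨accumulate fun n => (U n)ᶜ, monotone_accumulate, fun n => ?_, ?_⟩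
  · rw [accumulate_def]
    exact (finite_Iic n).isClosed_biUnion fun k _ => (hU k).isClosed_compl
  · rw [iUnion_accumulate, ← compl_iInter, ← hsU, compl_compl]

theorem IsFσ.exists_isFσ_isGδ_subset_of_union_eq_univ [PerfectlyNormalSpace X] {A B : Set X}
    (hA : IsFσ A) (hB : IsFσ B) (hAB : A ∪ B = univ) :
    ∃ H, IsFσ H ∧ IsGδ H ∧ H ⊆ A ∧ Hᶜ ⊆ B := by
  obtain ⟨C, -, hC, rfl⟩ := hA.exists_monotone_isClosed
  obtain ⟨D, -, hD, rfl⟩ := hB.exists_monotone_isClosed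
  -- `H` collects the points that enter some `C n` no later than they enter any `D k`.
  set H := ⋃ n, C n \ ⋃ k ∈ Iio n, D k
  set H' := ⋃ n, D n \ ⋃ k ∈ Iic n, C k
  have hcompl : Hᶜ = H' := by
    ext x
    simp only [H, H', mem_compl_iff, mem_iUnion, Set.mem_sdiff, mem_Iio, mem_Iic, not_exists,
      not_and, exists_prop]
    constructor
    · intro hx
      have hcover : ∃ n, x ∈ C n ∨ x ∈ D n := by
        have hx : x ∈ (⋃ n, C n) ∪ ⋃ n, D n := hAB ▸ mem_univ x
        simpa only [mem_union, mem_iUnion, ← exists_or] using hx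
      classical
      have hmin : ∀ k < Nat.find hcover, x ∉ C k ∧ x ∉ D k :=
        fun k hk => not_or.1 (Nat.find_min hcover hk)
      refine ⟨Nat.find hcover, ?_, fun k hk hCk => hx k hCk fun j hj => (hmin j (hj.trans_le hk)).2⟩
      exact (Nat.find_spec hcover).resolve_left fun hCn => hx _ hCn fun j hj => (hmin j hj).2
    · rintro ⟨m, hxm, hm⟩ n hxn hn
      rcases lt_or_ge m n with hmn | hnm
      · exact hn m hmn hxm
      · exact hm n hnm hxn
  have hpieces {E F : ℕ → Set X} (hE : ∀ n, IsClosed (E n)) (hF : ∀ n, IsClosed (F n))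
      (I : ℕ → Set ℕ) (hI : ∀ n, (I n).Finite) : IsFσ (⋃ n, E n \ ⋃ k ∈ I n, F k) :=
    IsFσ.iUnion fun n => (hE n).isFσ.inter
      ((hI n).isClosed_biUnion fun k _ => hF k).isOpen_compl.isFσ
  refine ⟨H, hpieces hC hD _ fun n => finite_Iio n, ?_, ?_, ?_⟩
  · rw [← isFσ_compl_iff, hcompl]
    exact hpieces hD hC _ fun n => finite_Iic n
  · exact iUnion_mono fun n => sdiff_subset
  · exact hcompl ▸ iUnion_mono fun n => sdiff_subset

theorem IsFσ.exists_tendsto_indicator [NormalSpace X] {H : Set X} (hH : IsFσ H) (hH' : IsGδ H) :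
    ∃ φ : ℕ → C(X, ℝ), (∀ n x, φ n x ∈ Icc 0 1) ∧
      ∀ x, Tendsto (fun n => φ n x) atTop (𝓝 (H.indicator 1 x)) := by
  obtain ⟨C, hCm, hC, rfl⟩ := hH.exists_monotone_isClosed
  obtain ⟨D, hDm, hD, hDC⟩ := (isFσ_compl_iff.2 hH').exists_monotone_isClosed
  have hdisj (n : ℕ) : Disjoint (D n) (C n) :=
    disjoint_compl_left.mono (hDC ▸ subset_iUnion D n) (subset_iUnion C n)
  choose φ hφD hφC hφ01 using
    fun n => exists_continuous_zero_one_of_isClosed (hD n) (hC n) (hdisj n)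
  refine ⟨φ, hφ01, fun x => tendsto_const_nhds.congr' ?_⟩
  by_cases hx : x ∈ ⋃ n, C n
  · obtain ⟨N, hN⟩ := mem_iUnion.1 hx
    filter_upwards [eventually_ge_atTop N] with n hn
    rw [indicator_of_mem hx, hφC n (hCm hn hN), Pi.one_apply]
  · obtain ⟨N, hN⟩ := mem_iUnion.1 (hDC ▸ hx : x ∈ ⋃ n, D n)
    filter_upwards [eventually_ge_atTop N] with n hn
    rw [indicator_of_notMem hx, hφD n (hDm hn hN), Pi.zero_apply]

def IsBaireOne (f : X → ℝ) : Prop :=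
  ∃ g : ℕ → X → ℝ, (∀ n, Continuous (g n)) ∧ ∀ x, Tendsto (fun n => g n x) atTop (𝓝 (f x))

theorem isBaireOne_tsum {h : ℕ → X → ℝ} {M : ℕ → ℝ} (hM : Summable M) (φ : ℕ → ℕ → X → ℝ)
    (hφ : ∀ n j, Continuous (φ n j)) (hφM : ∀ n j x, |φ n j x| ≤ M n)
    (hφh : ∀ n x, Tendsto (fun j => φ n j x) atTop (𝓝 (h n x))) :
    IsBaireOne fun x => ∑' n, h n x :=
  ⟨fun j x => ∑' n, φ n j x, fun j => continuous_tsum (fun n => hφ n j) hM fun n x => hφM n j x,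
    fun x => tendsto_tsum_of_dominated_convergence hM (fun n => hφh n x)
      (.of_forall fun j n => hφM n j x)⟩

theorem IsBaireOne.comp_of_mem_Ioo {F : X → ℝ} {a b : ℝ} (hF : IsBaireOne F)
    (hFab : ∀ x, F x ∈ Ioo a b) {φ : ℝ → ℝ} (hφ : ContinuousOn φ (Ioo a b)) :
    IsBaireOne (φ ∘ F) := by
  obtain ⟨g, hgc, hgF⟩ := hF
  -- Clamp the approximants to `[a, b]`, then pull them towards the midpoint by a vanishing amount.
  let ε : ℕ → ℝ := fun n => 1 / (n + 1)
  let g' : ℕ → X → ℝ := fun n x => (1 - ε n) * max a (min b (g n x)) + ε n * ((a + b) / 2)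
  have hg'ab (n : ℕ) (x : X) : g' n x ∈ Ioo a b := by
    have hab : a < b := (hFab x).1.trans (hFab x).2
    have hε : 0 < ε n ∧ ε n ≤ 1 := ⟨by positivity, div_le_one_of_le₀ (by simp) (by positivity)⟩
    have hlo : a ≤ max a (min b (g n x)) := le_max_left _ _
    have hhi : max a (min b (g n x)) ≤ b := max_le hab.le (min_le_left _ _)
    have hmid : 0 < ε n * (b - a) := mul_pos hε.1 (sub_pos.2 hab)
    simp only [g', mem_Ioo]
    constructor <;> nlinarith [mul_le_mul_of_nonneg_left hlo (sub_nonneg.2 hε.2),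
      mul_le_mul_of_nonneg_left hhi (sub_nonneg.2 hε.2)]
  refine ⟨fun n => φ ∘ g' n, fun n => hφ.comp_continuous (by fun_prop) (hg'ab n), fun x => ?_⟩
  have hclamp : Tendsto (fun n => max a (min b (g n x))) atTop (𝓝 (F x)) := by
    have := (tendsto_const_nhds (x := a)).max ((tendsto_const_nhds (x := b)).min (hgF x))
    rwa [min_eq_right (hFab x).2.le, max_eq_right (hFab x).1.le] at this
  have hε : Tendsto ε atTop (𝓝 0) := tendsto_one_div_add_atTop_nhds_zero_nat
  have hg' : Tendsto (fun n => g' n x) atTop (𝓝 (F x)) := by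
    simpa using (((tendsto_const_nhds (x := (1 : ℝ))).sub hε).mul hclamp).add
      (hε.mul_const ((a + b) / 2))
  exact (hφ.continuousAt (Ioo_mem_nhds (hFab x).1 (hFab x).2)).tendsto.comp hg'

def IsFσMeasurable (f : X → ℝ) : Prop :=
  ∀ U : Set ℝ, IsOpen U → IsFσ (f ⁻¹' U)

namespace IsFσMeasurable

variable {f g : X → ℝ}

theorem comp_continuous (hf : IsFσMeasurable f) {φ : ℝ → ℝ} (hφ : Continuous φ) :
    IsFσMeasurable (φ ∘ f) :=
  fun _ hU => hf _ (hU.preimage hφ)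

theorem piecewise {H : Set X} [∀ x, Decidable (x ∈ H)] (hH : IsFσ H) (hH' : IsGδ H)
    (hf : IsFσMeasurable f) (hg : IsFσMeasurable g) : IsFσMeasurable (H.piecewise f g) := by
  intro U hU
  rw [piecewise_preimage, Set.ite, sdiff_eq_compl_inter]
  exact ((hf U hU).inter hH).union ((isFσ_compl_iff.2 hH').inter (hg U hU))

theorem exists_isFσ_isGδ_between [PerfectlyNormalSpace X] (hf : IsFσMeasurable f) {a b : ℝ}
    (hab : a < b) : ∃ H, IsFσ H ∧ IsGδ H ∧ {x | b ≤ f x} ⊆ H ∧ H ⊆ {x | a < f x} := by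
  have hcover : f ⁻¹' Ioi a ∪ f ⁻¹' Iio b = univ :=
    eq_univ_of_forall fun x => (lt_or_ge a (f x)).imp id fun hx => hx.trans_lt hab
  obtain ⟨H, hH, hH', hHa, hHb⟩ := (hf _ isOpen_Ioi).exists_isFσ_isGδ_subset_of_union_eq_univ
    (hf _ isOpen_Iio) hcover
  exact ⟨H, hH, hH', fun x (hx : b ≤ f x) => by_contra fun hxH => not_lt.2 hx (hHb hxH), hHa⟩

theorem exists_eq_indicator_div_three_add [PerfectlyNormalSpace X] (hf : IsFσMeasurable f)
    (hf01 : ∀ x, f x ∈ Icc 0 1) :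
    ∃ H : Set X, ∃ g : X → ℝ, IsFσ H ∧ IsGδ H ∧ IsFσMeasurable g ∧ (∀ x, g x ∈ Icc 0 1) ∧
      ∀ x, f x = H.indicator 1 x / 3 + 2 / 3 * g x := by
  classical
  obtain ⟨H, hH, hH', hHb, hHa⟩ := hf.exists_isFσ_isGδ_between (by norm_num : (1 : ℝ) / 3 < 2 / 3)
  refine ⟨H, H.piecewise (fun x => 3 / 2 * (f x - 1 / 3)) (fun x => 3 / 2 * f x), hH, hH',
    IsFσMeasurable.piecewise hH hH' (hf.comp_continuous (φ := fun t => 3 / 2 * (t - 1 / 3))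
      (by fun_prop)) (hf.comp_continuous (φ := fun t => 3 / 2 * t) (by fun_prop)),
    fun x => ?_, fun x => ?_⟩ <;> by_cases hx : x ∈ H
  · have : 1 / 3 < f x := hHa hx
    simp only [piecewise_eq_of_mem _ _ _ hx, mem_Icc]
    constructor <;> linarith [(hf01 x).2]
  · have : f x < 2 / 3 := not_le.1 fun h => hx (hHb h)
    simp only [piecewise_eq_of_notMem _ _ _ hx, mem_Icc]
    constructor <;> linarith [(hf01 x).1]
  · simp only [piecewise_eq_of_mem _ _ _ hx, indicator_of_mem hx, Pi.one_apply]
    ring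
  · simp only [piecewise_eq_of_notMem _ _ _ hx, indicator_of_notMem hx]
    ring

theorem exists_hasSum_indicator [PerfectlyNormalSpace X] (hf : IsFσMeasurable f)
    (hf01 : ∀ x, f x ∈ Icc 0 1) :
    ∃ H : ℕ → Set X, (∀ n, IsFσ (H n) ∧ IsGδ (H n)) ∧
      ∀ x, HasSum (fun n => (2 / 3) ^ n / 3 * (H n).indicator 1 x) (f x) := by
  let S := {g : X → ℝ // IsFσMeasurable g ∧ ∀ x, g x ∈ Icc 0 1}
  choose H g hH hH' hg hg01 hgH using fun s : S => s.2.1.exists_eq_indicator_div_three_add s.2.2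
  let r (n : ℕ) : S := (fun s => ⟨g s, hg s, hg01 s⟩)^[n] ⟨f, hf, hf01⟩
  refine ⟨fun n => H (r n), fun n => ⟨hH _, hH' _⟩, fun x => ?_⟩
  have hpartial (N : ℕ) : ∑ n ∈ Finset.range N, (2 / 3) ^ n / 3 * (H (r n)).indicator 1 x
      = f x - (2 / 3) ^ N * (r N).1 x := by
    induction N with
    | zero => simp [r]
    | succ N ih =>
      have hrN : (r (N + 1)).1 = g (r N) := by
        simp only [r, Function.iterate_succ_apply']
      rw [Finset.sum_range_succ, ih, hrN, hgH (r N) x, pow_succ]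
      ring
  have hrem : Tendsto (fun N => (2 / 3 : ℝ) ^ N * (r N).1 x) atTop (𝓝 0) :=
    squeeze_zero (fun N => mul_nonneg (by positivity) ((r N).2.2 x).1)
      (fun N => mul_le_of_le_one_right (by positivity) ((r N).2.2 x).2)
      (tendsto_pow_atTop_nhds_zero_of_lt_one (by norm_num) (by norm_num))
  rw [hasSum_iff_tendsto_nat_of_nonneg fun n => mul_nonneg (by positivity)
    (indicator_nonneg (by simp) x)]
  simpa [hpartial] using tendsto_const_nhds.sub hrem

theorem isBaireOne_of_mem_Icc [PerfectlyNormalSpace X] (hf : IsFσMeasurable f)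
    (hf01 : ∀ x, f x ∈ Icc 0 1) : IsBaireOne f := by
  obtain ⟨H, hH, hsum⟩ := hf.exists_hasSum_indicator hf01
  choose φ hφ01 hφ using fun n => (hH n).1.exists_tendsto_indicator (hH n).2
  have hbound (n j : ℕ) (x : X) : |(2 / 3) ^ n / 3 * φ n j x| ≤ (2 / 3) ^ n / 3 := by
    rw [abs_mul, abs_of_pos (by positivity), abs_of_nonneg (hφ01 n j x).1]
    exact mul_le_of_le_one_right (by positivity) (hφ01 n j x).2
  convert isBaireOne_tsum ((summable_geometric_of_lt_one (by norm_num) (by norm_num)).div_const 3)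
    (fun n j x => (2 / 3) ^ n / 3 * φ n j x) (fun n j => (φ n j).continuous.const_mul _) hbound
    fun n x => (hφ n x).const_mul _
  exact (hsum _).tsum_eq.symm

theorem isBaireOne [PerfectlyNormalSpace X] (hf : IsFσMeasurable f) : IsBaireOne f := by
  have hσ : IsBaireOne (sigmoid ∘ f) :=
    (hf.comp_continuous continuous_sigmoid).isBaireOne_of_mem_Icc
      fun x => ⟨sigmoid_nonneg _, sigmoid_le_one _⟩
  simpa [Function.comp_def, logit_sigmoid] using
    hσ.comp_of_mem_Ioo (fun x => ⟨sigmoid_pos _, sigmoid_lt_one _⟩) continuousOn_logit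

end IsFσMeasurable

theorem IsOpen.isNowhereDense_frontier {V : Set X} (hV : IsOpen V) :
    IsNowhereDense (frontier V) := by
  rw [isClosed_frontier.isNowhereDense_iff, ← frontier_compl]
  exact interior_frontier hV.isClosed_compl

theorem isFσ_of_subset_closure_interior [T1Space X] [PerfectlyNormalSpace X]
    (hX : ∀ N : Set X, IsNowhereDense N → N.Countable) {s : Set X}
    (hs : s ⊆ closure (interior s)) : IsFσ s := by
  have hdiff : s \ interior s ⊆ frontier (interior s) :=
    fun x hx => ⟨hs hx.1, by rw [interior_interior]; exact hx.2⟩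
  rw [← union_sdiff_cancel (interior_subset (s := s))]
  exact isOpen_interior.isFσ.union ((hX _ isOpen_interior.isNowhereDense_frontier).mono hdiff).isFσ

end

theorem quasicontinuous_baireOne {X : Type*} [TopologicalSpace X] [T1Space X]
    [PerfectlyNormalSpace X]
    (hX : ∀ N : Set X, IsNowhereDense N → N.Countable)
    (f : X → ℝ)
    (hf : ∀ O : Set ℝ, IsOpen O → f ⁻¹' O ⊆ closure (interior (f ⁻¹' O))) :
    ∃ g : ℕ → X → ℝ, (∀ n, Continuous (g n)) ∧
      ∀ x, Filter.Tendsto (fun n => g n x) Filter.atTop (nhds (f x)) :=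
  IsFσMeasurable.isBaireOne fun O hO => isFσ_of_subset_closure_interior hX (hf O hO)
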